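/- There is a constant c_N > 0, depending only on the dimension N, with the following property: for every 0 < s < t < 1 and every measurable set E ⊆ ℝ^N with |E| < ∞, one has the interpolation estimate P_s(E) ≤ c_N · (1/s) · (1 − s/t)^{−1} · |E|^{1 − s/t} · ((1−t)·P_t(E))^{s/t} (as an inequality in [0,∞]). -/

import Mathlib

/-!
Write `D(z) = |E \ (E + z)|`. By Fubini, `P_α(E) = ∫ |z|^{-(N+α)} D(z) dz`, and `D` is
subadditive, so `D(z) ≤ 2^j D(2^{-j} z)`. After rescaling, the integral of `D` over a dyadic shell
`{ρ/2 < |z| ≤ ρ}` is at most `2^{j(N+1)}` times its integral over the shell of radius `ρ/2^j`;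
weighting these shells by `(ρ/2^j)^{-(N+t)}` and summing over `j` bounds `P_t(E)` from below by
`ρ^{-(N+t)} ∫_{shell ρ} D` times `∑_j 2^{-j(1-t)} ≥ 1/(1-t)`. Hence
`∫_{shell ρ} D ≤ ρ^{N+t} (1-t) P_t(E)`. Splitting `P_s(E)` at radius `r`, the shells inside are
controlled by this bound and those outside by `D ≤ |E|`, which gives
`P_s(E) ≲ r^{-s} |E| / s + r^{t-s} (1-t) P_t(E) / (t-s)`; the choice
`r^t = |E| / ((1-t) P_t(E))` balances the two terms.
-/

open MeasureTheory ENNReal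

/-- Interaction energy `∫_A ∫_B |x-y|^{-(N+α)} dy dx` in `[0,∞]`. -/
noncomputable def interEnergy (N : ℕ) (α : ℝ)
    (A B : Set (EuclideanSpace ℝ (Fin N))) : ℝ≥0∞ :=
  ∫⁻ x in A, ∫⁻ y in B, ENNReal.ofReal (‖x - y‖ ^ (-((N : ℝ) + α))) ∂volume ∂volume

/-- The fractional `α`-perimeter `P_α(E) = ∫_E ∫_{Eᶜ} |x-y|^{-(N+α)} dy dx`. -/
noncomputable def fracPer (N : ℕ) (α : ℝ) (E : Set (EuclideanSpace ℝ (Fin N))) : ℝ≥0∞ :=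
  interEnergy N α E Eᶜ

open Function Metric Set Module Filter Topology

lemma one_sub_le_two_rpow_neg {x : ℝ} (hx : 0 ≤ x) : 1 - x ≤ (2 : ℝ) ^ (-x) := by
  rw [Real.rpow_def_of_pos two_pos]
  nlinarith [Real.add_one_le_exp (Real.log 2 * -x), Real.log_two_lt_d9]

lemma div_four_le_one_sub_two_rpow_neg {x : ℝ} (hx : 0 ≤ x) (hx1 : x ≤ 1) :
    x / 4 ≤ 1 - (2 : ℝ) ^ (-x) := by
  have half_le : (2 : ℝ) ^ (-1 : ℝ) ≤ 2 ^ (-x) :=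
    Real.rpow_le_rpow_of_exponent_le one_le_two (by linarith)
  have hinv : (2 : ℝ) ^ (-x) * 2 ^ x = 1 := by
    rw [← Real.rpow_add two_pos, neg_add_cancel, Real.rpow_zero]
  have hexp : 1 + x * Real.log 2 ≤ (2 : ℝ) ^ x := by
    rw [Real.rpow_def_of_pos two_pos]
    linarith [Real.add_one_le_exp (Real.log 2 * x)]
  norm_num at half_le
  have hq : (2 : ℝ) ^ (-x) * (1 + x * Real.log 2) ≤ 1 :=
    (mul_le_mul_of_nonneg_left hexp (by positivity)).trans_eq hinv
  nlinarith [mul_le_mul_of_nonneg_right half_le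
    (mul_nonneg hx (Real.log_pos one_lt_two).le), Real.log_two_gt_d9]

lemma tsum_ofReal_two_rpow_neg_pow (x : ℝ) :
    ∑' k : ℕ, ENNReal.ofReal ((2 : ℝ) ^ (-x)) ^ k = (ENNReal.ofReal (1 - (2 : ℝ) ^ (-x)))⁻¹ := by
  rw [ENNReal.tsum_geometric, ENNReal.ofReal_sub _ (by positivity), ENNReal.ofReal_one]

lemma tsum_ofReal_two_rpow_neg_pow_le {x : ℝ} (hx : 0 < x) (hx1 : x ≤ 1) :
    ∑' k : ℕ, ENNReal.ofReal ((2 : ℝ) ^ (-x)) ^ k ≤ ENNReal.ofReal (4 / x) := by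
  have hle := div_four_le_one_sub_two_rpow_neg hx.le hx1
  rw [tsum_ofReal_two_rpow_neg_pow, ← ENNReal.ofReal_inv_of_pos (by linarith)]
  refine ENNReal.ofReal_le_ofReal ?_
  rw [← inv_div]
  exact inv_anti₀ (by positivity) hle

lemma one_le_ofReal_mul_tsum_ofReal_two_rpow_neg_pow {x : ℝ} (hx : 0 < x) :
    1 ≤ ENNReal.ofReal x * ∑' k : ℕ, ENNReal.ofReal ((2 : ℝ) ^ (-x)) ^ k := by
  have hlt : (2 : ℝ) ^ (-x) < 1 := Real.rpow_lt_one_of_one_lt_of_neg one_lt_two (by linarith)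
  rw [tsum_ofReal_two_rpow_neg_pow, ← div_eq_mul_inv,
    ENNReal.le_div_iff_mul_le (Or.inl (by simpa using hlt)) (Or.inl ENNReal.ofReal_ne_top), one_mul]
  exact ENNReal.ofReal_le_ofReal (by linarith [one_sub_le_two_rpow_neg hx.le])

lemma div_two_pow_rpow {r : ℝ} (hr : 0 ≤ r) (β : ℝ) (k : ℕ) :
    (r / 2 ^ k) ^ β = r ^ β * ((2 : ℝ) ^ (-β)) ^ k := by
  rw [Real.div_rpow hr (by positivity), ← Real.rpow_pow_comm zero_le_two, Real.rpow_neg zero_le_two,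
    inv_pow, div_eq_mul_inv]

lemma two_pow_mul_rpow {r : ℝ} (hr : 0 ≤ r) (β : ℝ) (k : ℕ) :
    (2 ^ k * r) ^ β = r ^ β * ((2 : ℝ) ^ β) ^ k := by
  rw [Real.mul_rpow (by positivity) hr, ← Real.rpow_pow_comm zero_le_two, mul_comm]

lemma div_two_rpow_neg_mul_rpow {ρ : ℝ} (hρ : 0 < ρ) (β γ : ℝ) :
    (ρ / 2) ^ (-β) * ρ ^ γ = 2 ^ β * ρ ^ (γ - β) := by
  rw [Real.div_rpow hρ.le zero_le_two, Real.rpow_neg zero_le_two, Real.rpow_sub hρ,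
    Real.rpow_neg hρ.le]
  field_simp

lemma rpow_interpolation {a b s t : ℝ} (ha : 0 < a) (hb : 0 < b) (ht : 0 < t) :
    ((a / b) ^ t⁻¹) ^ (-s) * a = a ^ (1 - s / t) * b ^ (s / t) ∧
      ((a / b) ^ t⁻¹) ^ (t - s) * b = a ^ (1 - s / t) * b ^ (s / t) := by
  have hu : 0 < a / b := div_pos ha hb
  have hθ : a ^ (1 - s / t) * b ^ (s / t) = (a / b) ^ (-(s / t)) * a := by
    rw [Real.rpow_neg hu.le, Real.div_rpow ha.le hb.le, Real.rpow_sub ha, Real.rpow_one]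
    field_simp
  rw [hθ, ← Real.rpow_mul hu.le, ← Real.rpow_mul hu.le]
  constructor
  · congr 2
    ring
  · rw [show t⁻¹ * (t - s) = 1 + -(s / t) by field_simp; ring, Real.rpow_add hu, Real.rpow_one]
    field_simp
lemma ofReal_two_rpow_mul_mul_ofReal_four_div_le (d : ℕ) {s a b x : ℝ} (hs : s ≤ 1) (ha : 0 ≤ a)
    (hab : a ≤ b) (hx : 0 ≤ x) :
    ENNReal.ofReal (2 ^ ((d : ℝ) + s) * a) * ENNReal.ofReal (4 / x)
      ≤ ENNReal.ofReal b * ENNReal.ofReal (2 ^ (d + 3) / x) := by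
  have h2 : (2 : ℝ) ^ ((d : ℝ) + s) ≤ 2 ^ (d + 1) := by
    rw [← Real.rpow_natCast, Nat.cast_succ]
    exact Real.rpow_le_rpow_of_exponent_le one_le_two (by linarith)
  rw [← ENNReal.ofReal_mul (by positivity), ← ENNReal.ofReal_mul (by linarith)]
  refine ENNReal.ofReal_le_ofReal ?_
  calc 2 ^ ((d : ℝ) + s) * a * (4 / x) = 2 ^ ((d : ℝ) + s) * a * 4 / x := by ring
    _ ≤ 2 ^ (d + 1) * b * 4 / x := by gcongr
    _ = b * (2 ^ (d + 3) / x) := by ring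

lemma setLIntegral_iUnion_le_of_le_two_rpow_neg_pow {α : Type*} [MeasurableSpace α]
    {μ : Measure α} {S : ℕ → Set α} {f : α → ℝ≥0∞} {A X : ℝ≥0∞} {x : ℝ} (hx : 0 < x)
    (hx1 : x ≤ 1) (h : ∀ k, ∫⁻ z in S k, f z ∂μ ≤ A * ENNReal.ofReal ((2 : ℝ) ^ (-x)) ^ k * X) :
    ∫⁻ z in ⋃ k, S k, f z ∂μ ≤ A * ENNReal.ofReal (4 / x) * X :=
  calc ∫⁻ z in ⋃ k, S k, f z ∂μ ≤ ∑' k, A * ENNReal.ofReal ((2 : ℝ) ^ (-x)) ^ k * X :=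
        (lintegral_iUnion_le _ _).trans (ENNReal.tsum_le_tsum h)
    _ = A * (∑' k, ENNReal.ofReal ((2 : ℝ) ^ (-x)) ^ k) * X := by
        rw [ENNReal.tsum_mul_right, ENNReal.tsum_mul_left]
    _ ≤ A * ENNReal.ofReal (4 / x) * X := by
        gcongr
        exact tsum_ofReal_two_rpow_neg_pow_le hx hx1


lemma le_two_mul_rpow_mul_rpow_of_forall_le {X a b : ℝ≥0∞} {s t : ℝ} (hs : 0 < s) (hst : s < t)
    (ha0 : a ≠ 0) (ha : a ≠ ⊤)
    (h : ∀ r : ℝ, 0 < r → X ≤ ENNReal.ofReal (r ^ (-s)) * a + ENNReal.ofReal (r ^ (t - s)) * b) :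
    X ≤ 2 * a ^ (1 - s / t) * b ^ (s / t) := by
  have ht : 0 < t := hs.trans hst
  have hθ : 0 < s / t := div_pos hs ht
  have hθ' : 0 < 1 - s / t := by rw [sub_pos, div_lt_one ht]; exact hst
  rcases eq_or_ne b ⊤ with rfl | hb
  · have : 2 * a ^ (1 - s / t) ≠ 0 := by simp [ENNReal.rpow_eq_zero_iff, ha0, ha]
    rw [ENNReal.top_rpow_of_pos hθ, ENNReal.mul_top this]
    exact le_top
  rcases eq_or_ne b 0 with rfl | hb0
  · have hlim : Tendsto (fun r : ℝ => ENNReal.ofReal (r ^ (-s)) * a) atTop (𝓝 0) := by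
      simpa using
        ENNReal.Tendsto.mul_const (ENNReal.tendsto_ofReal (tendsto_rpow_neg_atTop hs)) (Or.inr ha)
    rw [ENNReal.zero_rpow_of_pos hθ, mul_zero]
    exact ge_of_tendsto hlim ((eventually_gt_atTop 0).mono fun r hr => by simpa using h r hr)
  obtain ⟨a, ha', rfl⟩ : ∃ a' : ℝ, 0 < a' ∧ a = ENNReal.ofReal a' :=
    ⟨a.toReal, ENNReal.toReal_pos ha0 ha, (ENNReal.ofReal_toReal ha).symm⟩
  obtain ⟨b, hb', rfl⟩ : ∃ b' : ℝ, 0 < b' ∧ b = ENNReal.ofReal b' :=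
    ⟨b.toReal, ENNReal.toReal_pos hb0 hb, (ENNReal.ofReal_toReal hb).symm⟩
  obtain ⟨hleft, hright⟩ := rpow_interpolation (s := s) ha' hb' ht
  calc X ≤ _ := h ((a / b) ^ t⁻¹) (by positivity)
    _ = 2 * ENNReal.ofReal a ^ (1 - s / t) * ENNReal.ofReal b ^ (s / t) := by
      rw [← ENNReal.ofReal_mul (by positivity), ← ENNReal.ofReal_mul (by positivity), hleft,
        hright, ENNReal.ofReal_rpow_of_pos ha', ENNReal.ofReal_rpow_of_pos hb',
        mul_assoc, ← ENNReal.ofReal_mul (by positivity), ← two_mul]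

lemma le_two_mul_mul_rpow_mul_rpow_of_forall_le {X a b K : ℝ≥0∞} {s t : ℝ} (hs : 0 < s)
    (hst : s < t) (ha0 : a ≠ 0) (ha : a ≠ ⊤) (hK : K ≠ ⊤)
    (h : ∀ r : ℝ, 0 < r →
      X ≤ ENNReal.ofReal (r ^ (-s)) * (K * a) + ENNReal.ofReal (r ^ (t - s)) * (K * b)) :
    X ≤ 2 * K * a ^ (1 - s / t) * b ^ (s / t) := by
  rcases eq_or_ne K 0 with rfl | hK0
  · simpa using h 1 one_pos
  have hθ : s / t ≤ 1 := (div_le_one (hs.trans hst)).2 hst.le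
  calc X ≤ 2 * (K * a) ^ (1 - s / t) * (K * b) ^ (s / t) :=
        le_two_mul_rpow_mul_rpow_of_forall_le hs hst (mul_ne_zero hK0 ha0)
          (ENNReal.mul_ne_top hK ha) h
    _ = 2 * (K ^ (1 - s / t) * K ^ (s / t)) * a ^ (1 - s / t) * b ^ (s / t) := by
        rw [ENNReal.mul_rpow_of_nonneg _ _ (by linarith),
          ENNReal.mul_rpow_of_nonneg _ _ (div_pos hs (hs.trans hst)).le]
        ring
    _ = 2 * K * a ^ (1 - s / t) * b ^ (s / t) := by
        rw [← ENNReal.rpow_add _ _ hK0 hK, sub_add_cancel, ENNReal.rpow_one]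

section TranslateDefect

variable {G : Type*} [MeasurableSpace G] [AddCommGroup G]

def translateDefect (μ : Measure G) (E : Set G) (z : G) : ℝ≥0∞ :=
  μ (E ∩ (· - z) ⁻¹' Eᶜ)

variable {μ : Measure G} {E : Set G}

lemma translateDefect_le_measure (z : G) : translateDefect μ E z ≤ μ E :=
  measure_mono inter_subset_left

lemma translateDefect_zero : translateDefect μ E 0 = 0 := by
  simp [translateDefect]

lemma translateDefect_add_le [MeasurableAdd G] [μ.IsAddRightInvariant] (z w : G) :
    translateDefect μ E (z + w) ≤ translateDefect μ E z + translateDefect μ E w := by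
  have hsub : E ∩ (· - (z + w)) ⁻¹' Eᶜ
      ⊆ (· + -w) ⁻¹' (E ∩ (· - z) ⁻¹' Eᶜ) ∪ E ∩ (· - w) ⁻¹' Eᶜ := by
    rintro x ⟨hxE, hx⟩
    by_cases hw : x - w ∈ E
    · left
      refine ⟨by simpa [sub_eq_add_neg] using hw, ?_⟩
      simpa [sub_eq_add_neg, add_assoc, add_comm w] using hx
    · exact Or.inr ⟨hxE, hw⟩
  calc translateDefect μ E (z + w)
      ≤ μ ((· + -w) ⁻¹' (E ∩ (· - z) ⁻¹' Eᶜ)) + translateDefect μ E w :=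
        (measure_mono hsub).trans (measure_union_le _ _)
    _ = translateDefect μ E z + translateDefect μ E w := by rw [measure_preimage_add_right]; rfl

lemma translateDefect_nsmul_le [MeasurableAdd G] [μ.IsAddRightInvariant] (n : ℕ) (z : G) :
    translateDefect μ E (n • z) ≤ n * translateDefect μ E z := by
  induction n with
  | zero => simp [translateDefect_zero]
  | succ n ih =>
    calc translateDefect μ E ((n + 1) • z)
        ≤ translateDefect μ E (n • z) + translateDefect μ E z := by
          rw [succ_nsmul]; exact translateDefect_add_le _ _
      _ ≤ n * translateDefect μ E z + translateDefect μ E z := by gcongr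
      _ = (n + 1 : ℕ) * translateDefect μ E z := by push_cast; ring

lemma translateDefect_le_two_pow_mul [Module ℝ G] [MeasurableAdd G] [μ.IsAddRightInvariant]
    (j : ℕ) (z : G) :
    translateDefect μ E z ≤ 2 ^ j * translateDefect μ E (((2 : ℝ) ^ j)⁻¹ • z) := by
  have hz : z = (2 ^ j : ℕ) • ((2 : ℝ) ^ j)⁻¹ • z := by
    rw [← Nat.cast_smul_eq_nsmul ℝ, smul_smul]
    push_cast
    rw [mul_inv_cancel₀ (by positivity), one_smul]
  conv_lhs => rw [hz]
  exact (translateDefect_nsmul_le _ _).trans_eq (by push_cast; rfl)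

lemma translateDefect_eq_setLIntegral [MeasurableSub G] (hE : MeasurableSet E) (z : G) :
    translateDefect μ E z = ∫⁻ x in E, Eᶜ.indicator 1 (x - z) ∂μ := by
  have hpre : MeasurableSet ((· - z) ⁻¹' Eᶜ) := measurable_sub_const z hE.compl
  simp_rw [← indicator_comp_right (· - z) (g := (1 : G → ℝ≥0∞)), Pi.one_comp,
    lintegral_indicator_one hpre, Measure.restrict_apply hpre, inter_comm]
  rfl

lemma measurable_translateDefect [MeasurableSub₂ G] [SFinite μ] (hE : MeasurableSet E) :
    Measurable (translateDefect μ E) := by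
  simp_rw [funext (translateDefect_eq_setLIntegral (μ := μ) hE)]
  exact Measurable.lintegral_prod_right'
    ((measurable_one.indicator hE.compl).comp (measurable_snd.sub measurable_fst))

lemma setLIntegral_setLIntegral_compl_sub [MeasurableAdd₂ G] [MeasurableNeg G] [SFinite μ]
    [μ.IsAddLeftInvariant] [μ.IsNegInvariant] (hE : MeasurableSet E) {f : G → ℝ≥0∞}
    (hf : Measurable f) :
    ∫⁻ x in E, ∫⁻ y in Eᶜ, f (x - y) ∂μ ∂μ = ∫⁻ z, f z * translateDefect μ E z ∂μ := by
  have hsubst (x : G) : ∫⁻ y in Eᶜ, f (x - y) ∂μ = ∫⁻ z, Eᶜ.indicator 1 (x - z) * f z ∂μ := by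
    rw [← lintegral_indicator hE.compl, ← lintegral_sub_left_eq_self _ x]
    congr with z
    by_cases hz : x - z ∈ E <;> simp [hz]
  simp_rw [hsubst]
  rw [lintegral_lintegral_swap]
  · congr with z
    have hmeas : Measurable fun x => Eᶜ.indicator (1 : G → ℝ≥0∞) (x - z) :=
      (measurable_one.indicator hE.compl).comp (measurable_sub_const z)
    rw [lintegral_mul_const _ hmeas, translateDefect_eq_setLIntegral hE, mul_comm]
  · exact (((measurable_one.indicator hE.compl).comp (measurable_fst.sub measurable_snd)).mul
      (hf.comp measurable_snd)).aemeasurable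

end TranslateDefect

section DyadicShell

variable {F : Type*} [NormedAddCommGroup F]

noncomputable def powerKernel (β : ℝ) (z : F) : ℝ≥0∞ :=
  ENNReal.ofReal (‖z‖ ^ (-β))

def dyadicShell (ρ : ℝ) : Set F :=
  {z | ρ / 2 < ‖z‖ ∧ ‖z‖ ≤ ρ}

variable {β ρ r : ℝ} {z : F}

lemma measurable_powerKernel [MeasurableSpace F] [OpensMeasurableSpace F] (β : ℝ) :
    Measurable (powerKernel (F := F) β) :=
  (measurable_norm.pow_const _).ennreal_ofReal

lemma measurableSet_dyadicShell [MeasurableSpace F] [OpensMeasurableSpace F] (ρ : ℝ) :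
    MeasurableSet (dyadicShell (F := F) ρ) :=
  measurable_norm measurableSet_Ioc

lemma pos_of_mem_dyadicShell (hz : z ∈ dyadicShell ρ) : 0 < ρ := by
  linarith [hz.1, hz.2]

lemma powerKernel_le_of_mem_dyadicShell (hβ : 0 ≤ β) (hz : z ∈ dyadicShell ρ) :
    powerKernel β z ≤ ENNReal.ofReal ((ρ / 2) ^ (-β)) :=
  ENNReal.ofReal_le_ofReal <| Real.rpow_le_rpow_of_nonpos
    (half_pos (pos_of_mem_dyadicShell hz)) hz.1.le (neg_nonpos.2 hβ)

lemma ofReal_rpow_le_powerKernel_of_mem_dyadicShell (hβ : 0 ≤ β) (hz : z ∈ dyadicShell ρ) :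
    ENNReal.ofReal (ρ ^ (-β)) ≤ powerKernel β z :=
  ENNReal.ofReal_le_ofReal <| Real.rpow_le_rpow_of_nonpos
    ((half_pos (pos_of_mem_dyadicShell hz)).trans hz.1) hz.2 (neg_nonpos.2 hβ)

lemma dyadicShell_subset_closedBall : dyadicShell ρ ⊆ closedBall (0 : F) ρ :=
  fun _ hz => mem_closedBall_zero_iff.2 hz.2

lemma pairwise_disjoint_dyadicShell_div_two_pow (ρ : ℝ) :
    Pairwise (Disjoint on fun k : ℕ => dyadicShell (F := F) (ρ / 2 ^ k)) := by
  refine (pairwise_disjoint_on _).2 fun k l hkl => Set.disjoint_left.2 fun z hk hl => ?_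
  have hρ : 0 < ρ := (div_pos_iff_of_pos_right (by positivity)).1 (pos_of_mem_dyadicShell hk)
  have : ρ / 2 ^ l ≤ ρ / 2 ^ k / 2 := by
    rw [div_div, ← pow_succ]
    exact div_le_div_of_nonneg_left hρ.le (by positivity) (pow_le_pow_right₀ one_le_two hkl)
  linarith [hk.1, hl.2]

lemma exists_mem_dyadicShell_div_two_pow (hz : z ≠ 0) (hzr : ‖z‖ ≤ r) :
    ∃ k : ℕ, z ∈ dyadicShell (r / 2 ^ k) := by
  have hz0 := norm_pos_iff.2 hz
  have hr : 0 < r := hz0.trans_le hzr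
  obtain ⟨k, hk1, hk2⟩ := exists_nat_pow_near_of_lt_one (div_pos hz0 hr) ((div_le_one hr).2 hzr)
    (by norm_num : (0 : ℝ) < 1 / 2) (by norm_num)
  refine ⟨k, ?_, ?_⟩
  · rw [div_div, ← pow_succ, div_lt_iff₀ (by positivity)]
    rw [one_div_pow, div_lt_div_iff₀ (by positivity) hr] at hk1
    linarith
  · rw [le_div_iff₀ (by positivity)]
    rw [one_div_pow, div_le_div_iff₀ hr (by positivity)] at hk2
    linarith

lemma exists_mem_dyadicShell_two_pow_mul (hr : 0 < r) (hz : r < ‖z‖) :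
    ∃ k : ℕ, z ∈ dyadicShell (2 ^ k * (2 * r)) := by
  obtain ⟨n, hn1, hn2⟩ := exists_mem_Ioc_zpow (div_pos (hr.trans hz) hr) one_lt_two
  have hn : 0 ≤ n := by
    by_contra! hn
    have : (2 : ℝ) ^ (n + 1) ≤ 1 := zpow_le_one_of_nonpos₀ one_le_two (by omega)
    linarith [(one_lt_div hr).2 hz]
  lift n to ℕ using hn
  rw [zpow_natCast, lt_div_iff₀ hr] at hn1
  rw [← Nat.cast_succ, zpow_natCast, div_le_iff₀ hr, pow_succ] at hn2
  exact ⟨n, by linarith, by linarith⟩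

lemma setLIntegral_dyadicShell_powerKernel_mul_le_of_le [MeasurableSpace F]
    [OpensMeasurableSpace F] (μ : Measure F) (hβ : 0 ≤ β) {f : F → ℝ≥0∞} {γ : ℝ} {X : ℝ≥0∞}
    (hρ : 0 < ρ) (hf : ∫⁻ z in dyadicShell ρ, f z ∂μ ≤ ENNReal.ofReal (ρ ^ γ) * X) :
    ∫⁻ z in dyadicShell ρ, powerKernel β z * f z ∂μ
      ≤ ENNReal.ofReal (2 ^ β * ρ ^ (γ - β)) * X := by
  calc ∫⁻ z in dyadicShell ρ, powerKernel β z * f z ∂μ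
      ≤ ∫⁻ z in dyadicShell ρ, ENNReal.ofReal ((ρ / 2) ^ (-β)) * f z ∂μ :=
        setLIntegral_mono' (measurableSet_dyadicShell ρ) fun z hz =>
          mul_le_mul_left (powerKernel_le_of_mem_dyadicShell hβ hz) _
    _ ≤ ENNReal.ofReal ((ρ / 2) ^ (-β)) * (ENNReal.ofReal (ρ ^ γ) * X) := by
        rw [lintegral_const_mul' _ _ ENNReal.ofReal_ne_top]
        gcongr
    _ = ENNReal.ofReal (2 ^ β * ρ ^ (γ - β)) * X := by
        rw [← mul_assoc, ← ENNReal.ofReal_mul (by positivity), div_two_rpow_neg_mul_rpow hρ]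

lemma ofReal_rpow_mul_setLIntegral_dyadicShell_le [MeasurableSpace F] [OpensMeasurableSpace F]
    (μ : Measure F) (hβ : 0 ≤ β) (f : F → ℝ≥0∞) (ρ : ℝ) :
    ENNReal.ofReal (ρ ^ (-β)) * ∫⁻ z in dyadicShell ρ, f z ∂μ
      ≤ ∫⁻ z in dyadicShell ρ, powerKernel β z * f z ∂μ := by
  rw [← lintegral_const_mul' _ _ ENNReal.ofReal_ne_top]
  exact setLIntegral_mono' (measurableSet_dyadicShell ρ) fun z hz =>
    mul_le_mul_left (ofReal_rpow_le_powerKernel_of_mem_dyadicShell hβ hz) _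

lemma smul_mem_dyadicShell_iff [NormedSpace ℝ F] {c : ℝ} (hc : 0 < c) :
    c • z ∈ dyadicShell (c * ρ) ↔ z ∈ dyadicShell ρ := by
  simp only [dyadicShell, mem_ofPred_eq, norm_smul, Real.norm_of_nonneg hc.le, mul_div_assoc,
    mul_lt_mul_iff_right₀ hc, mul_le_mul_iff_right₀ hc]

end DyadicShell

section AddHaar

variable {F : Type*} [NormedAddCommGroup F] [NormedSpace ℝ F] [MeasurableSpace F] [BorelSpace F]
  [FiniteDimensional ℝ F] {μ : Measure F} [μ.IsAddHaarMeasure] {E : Set F}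

lemma setLIntegral_dyadicShell_comp_smul {f : F → ℝ≥0∞} (hf : Measurable f) {c : ℝ}
    (hc : 0 < c) (ρ : ℝ) :
    ∫⁻ z in dyadicShell ρ, f (c • z) ∂μ
      = ENNReal.ofReal ((c ^ finrank ℝ F)⁻¹) * ∫⁻ z in dyadicShell (c * ρ), f z ∂μ := by
  have hpre : (c • ·) ⁻¹' dyadicShell (c * ρ) = dyadicShell (F := F) ρ := by
    ext z
    exact smul_mem_dyadicShell_iff hc
  rw [← hpre, ← setLIntegral_map (measurableSet_dyadicShell _) hf (measurable_const_smul c),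
    Measure.map_addHaar_smul μ hc.ne', Measure.restrict_smul, lintegral_smul_measure,
    abs_of_pos (by positivity), smul_eq_mul]

lemma setLIntegral_dyadicShell_translateDefect_le_measure {ρ : ℝ} (hρ : 0 ≤ ρ) :
    ∫⁻ z in dyadicShell ρ, translateDefect μ E z ∂μ
      ≤ ENNReal.ofReal (ρ ^ (finrank ℝ F : ℝ)) * (μ (ball 0 1) * μ E) :=
  calc ∫⁻ z in dyadicShell ρ, translateDefect μ E z ∂μ
      ≤ ∫⁻ _ in dyadicShell ρ, μ E ∂μ :=
        setLIntegral_mono' (measurableSet_dyadicShell ρ) fun z _ => translateDefect_le_measure z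
    _ ≤ μ E * μ (closedBall 0 ρ) := by
        rw [setLIntegral_const]
        gcongr
        exact dyadicShell_subset_closedBall
    _ = ENNReal.ofReal (ρ ^ (finrank ℝ F : ℝ)) * (μ (ball 0 1) * μ E) := by
        rw [Measure.addHaar_closedBall μ _ hρ, Real.rpow_natCast]
        ring

lemma setLIntegral_dyadicShell_translateDefect_le_two_pow_mul (hE : MeasurableSet E) (ρ : ℝ)
    (j : ℕ) :
    ∫⁻ z in dyadicShell ρ, translateDefect μ E z ∂μ
      ≤ 2 ^ (j * (finrank ℝ F + 1))
        * ∫⁻ z in dyadicShell (ρ / 2 ^ j), translateDefect μ E z ∂μ := by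
  calc ∫⁻ z in dyadicShell ρ, translateDefect μ E z ∂μ
      ≤ ∫⁻ z in dyadicShell ρ, 2 ^ j * translateDefect μ E (((2 : ℝ) ^ j)⁻¹ • z) ∂μ :=
        setLIntegral_mono' (measurableSet_dyadicShell ρ) fun z _ =>
          translateDefect_le_two_pow_mul j z
    _ = 2 ^ j * (ENNReal.ofReal ((((2 : ℝ) ^ j)⁻¹ ^ finrank ℝ F)⁻¹)
          * ∫⁻ z in dyadicShell (((2 : ℝ) ^ j)⁻¹ * ρ), translateDefect μ E z ∂μ) := by
        rw [lintegral_const_mul' _ _ (by simp),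
          setLIntegral_dyadicShell_comp_smul (measurable_translateDefect hE) (by positivity)]
    _ = 2 ^ (j * (finrank ℝ F + 1))
          * ∫⁻ z in dyadicShell (ρ / 2 ^ j), translateDefect μ E z ∂μ := by
        rw [inv_pow, inv_inv, ← pow_mul, ENNReal.ofReal_pow zero_le_two, ENNReal.ofReal_ofNat,
          ← mul_assoc, ← pow_add, inv_mul_eq_div]
        ring_nf

lemma ofReal_rpow_mul_pow_mul_setLIntegral_dyadicShell_le (hE : MeasurableSet E) {ρ t : ℝ}
    (hρ : 0 < ρ) (ht0 : 0 ≤ t) (j : ℕ) :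
    ENNReal.ofReal (ρ ^ (-((finrank ℝ F : ℝ) + t))) * ENNReal.ofReal ((2 : ℝ) ^ (-(1 - t))) ^ j
        * ∫⁻ z in dyadicShell ρ, translateDefect μ E z ∂μ
      ≤ ∫⁻ z in dyadicShell (ρ / 2 ^ j),
          powerKernel (finrank ℝ F + t) z * translateDefect μ E z ∂μ := by
  set d := finrank ℝ F
  have hbase : (2 : ℝ) ^ (-(1 - t)) * 2 ^ (d + 1) = 2 ^ ((d : ℝ) + t) := by
    rw [← Real.rpow_natCast, ← Real.rpow_add two_pos]
    congr 1
    push_cast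
    ring
  have hweight : ENNReal.ofReal (ρ ^ (-((d : ℝ) + t))) * ENNReal.ofReal ((2 : ℝ) ^ (-(1 - t))) ^ j
      * 2 ^ (j * (d + 1)) = ENNReal.ofReal ((ρ / 2 ^ j) ^ (-((d : ℝ) + t))) := by
    rw [pow_mul', ← ENNReal.ofReal_ofNat 2, ← ENNReal.ofReal_pow zero_le_two, mul_assoc, ← mul_pow,
      ← ENNReal.ofReal_mul (by positivity), hbase, ← ENNReal.ofReal_pow (by positivity),
      ← ENNReal.ofReal_mul (by positivity), div_two_pow_rpow hρ.le, neg_neg]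
  calc ENNReal.ofReal (ρ ^ (-((d : ℝ) + t))) * ENNReal.ofReal ((2 : ℝ) ^ (-(1 - t))) ^ j
        * ∫⁻ z in dyadicShell ρ, translateDefect μ E z ∂μ
      ≤ ENNReal.ofReal (ρ ^ (-((d : ℝ) + t))) * ENNReal.ofReal ((2 : ℝ) ^ (-(1 - t))) ^ j
        * (2 ^ (j * (d + 1)) * ∫⁻ z in dyadicShell (ρ / 2 ^ j), translateDefect μ E z ∂μ) := by
        gcongr
        exact setLIntegral_dyadicShell_translateDefect_le_two_pow_mul hE ρ j
    _ = ENNReal.ofReal ((ρ / 2 ^ j) ^ (-((d : ℝ) + t)))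
        * ∫⁻ z in dyadicShell (ρ / 2 ^ j), translateDefect μ E z ∂μ := by
        rw [← mul_assoc, hweight]
    _ ≤ _ := ofReal_rpow_mul_setLIntegral_dyadicShell_le μ (by positivity) _ _

lemma setLIntegral_dyadicShell_translateDefect_le (hE : MeasurableSet E) {ρ t : ℝ} (hρ : 0 < ρ)
    (ht0 : 0 ≤ t) (ht1 : t < 1) :
    ∫⁻ z in dyadicShell ρ, translateDefect μ E z ∂μ
      ≤ ENNReal.ofReal (ρ ^ ((finrank ℝ F : ℝ) + t)) * (ENNReal.ofReal (1 - t)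
        * ∫⁻ z, powerKernel (finrank ℝ F + t) z * translateDefect μ E z ∂μ) := by
  set β : ℝ := finrank ℝ F + t
  set q := ENNReal.ofReal ((2 : ℝ) ^ (-(1 - t)))
  set I := ∫⁻ z in dyadicShell ρ, translateDefect μ E z ∂μ
  have hsum : ENNReal.ofReal (ρ ^ (-β)) * (∑' j : ℕ, q ^ j) * I
      ≤ ∫⁻ z, powerKernel β z * translateDefect μ E z ∂μ :=
    calc ENNReal.ofReal (ρ ^ (-β)) * (∑' j : ℕ, q ^ j) * I
        = ∑' j : ℕ, ENNReal.ofReal (ρ ^ (-β)) * q ^ j * I := by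
          rw [ENNReal.tsum_mul_right, ENNReal.tsum_mul_left]
      _ ≤ ∑' j : ℕ,
            ∫⁻ z in dyadicShell (ρ / 2 ^ j), powerKernel β z * translateDefect μ E z ∂μ :=
          ENNReal.tsum_le_tsum (ofReal_rpow_mul_pow_mul_setLIntegral_dyadicShell_le hE hρ ht0)
      _ = ∫⁻ z in ⋃ j : ℕ, dyadicShell (ρ / 2 ^ j),
            powerKernel β z * translateDefect μ E z ∂μ :=
          (lintegral_iUnion (fun _ => measurableSet_dyadicShell _)
            (pairwise_disjoint_dyadicShell_div_two_pow ρ) _).symm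
      _ ≤ _ := setLIntegral_le_lintegral _ _
  have hone : 1 ≤ ENNReal.ofReal (ρ ^ β) * ENNReal.ofReal (ρ ^ (-β))
      * (ENNReal.ofReal (1 - t) * ∑' j : ℕ, q ^ j) := by
    rw [← ENNReal.ofReal_mul (by positivity), ← Real.rpow_add hρ, add_neg_cancel, Real.rpow_zero,
      ENNReal.ofReal_one, one_mul]
    exact one_le_ofReal_mul_tsum_ofReal_two_rpow_neg_pow (by linarith)
  calc I ≤ ENNReal.ofReal (ρ ^ β) * ENNReal.ofReal (ρ ^ (-β))
        * (ENNReal.ofReal (1 - t) * ∑' j : ℕ, q ^ j) * I := le_mul_of_one_le_left' hone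
    _ = ENNReal.ofReal (ρ ^ β)
        * (ENNReal.ofReal (1 - t) * (ENNReal.ofReal (ρ ^ (-β)) * (∑' j : ℕ, q ^ j) * I)) := by
        ring
    _ ≤ _ := by gcongr

lemma setLIntegral_closedBall_powerKernel_mul_translateDefect_le (hE : MeasurableSet E)
    {r s t : ℝ} (hr : 0 < r) (hs : 0 ≤ s) (hst : s < t) (ht1 : t < 1) :
    ∫⁻ z in closedBall 0 r, powerKernel (finrank ℝ F + s) z * translateDefect μ E z ∂μ
      ≤ ENNReal.ofReal (r ^ (t - s)) * (ENNReal.ofReal (2 ^ (finrank ℝ F + 3) / (t - s))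
        * (ENNReal.ofReal (1 - t)
          * ∫⁻ z, powerKernel (finrank ℝ F + t) z * translateDefect μ E z ∂μ)) := by
  set d := finrank ℝ F
  set Q := ENNReal.ofReal (1 - t) * ∫⁻ z, powerKernel (d + t) z * translateDefect μ E z ∂μ
  set q := ENNReal.ofReal ((2 : ℝ) ^ (-(t - s)))
  set f := fun z => powerKernel (d + s) z * translateDefect μ E z
  have hcover : closedBall (0 : F) r ⊆ {0} ∪ ⋃ k : ℕ, dyadicShell (r / 2 ^ k) := by
    intro z hz
    rcases eq_or_ne z 0 with rfl | hz0
    · exact Or.inl rfl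
    · exact Or.inr (mem_iUnion.2
        (exists_mem_dyadicShell_div_two_pow hz0 (mem_closedBall_zero_iff.1 hz)))
  have hzero : ∫⁻ z in {0}, f z ∂μ = 0 := by
    simp [f, translateDefect_zero]
  have hterm (k : ℕ) : ∫⁻ z in dyadicShell (r / 2 ^ k), f z ∂μ
      ≤ ENNReal.ofReal (2 ^ ((d : ℝ) + s) * r ^ (t - s)) * q ^ k * Q := by
    have hρ : 0 < r / 2 ^ k := by positivity
    calc ∫⁻ z in dyadicShell (r / 2 ^ k), f z ∂μ
        ≤ ENNReal.ofReal (2 ^ ((d : ℝ) + s) * (r / 2 ^ k) ^ ((d : ℝ) + t - (d + s))) * Q :=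
          setLIntegral_dyadicShell_powerKernel_mul_le_of_le μ (by positivity) hρ
            (setLIntegral_dyadicShell_translateDefect_le hE hρ (hs.trans hst.le) ht1)
      _ = ENNReal.ofReal (2 ^ ((d : ℝ) + s) * r ^ (t - s)) * q ^ k * Q := by
          rw [add_sub_add_left_eq_sub, div_two_pow_rpow hr.le, ← mul_assoc (2 ^ ((d : ℝ) + s)),
            ENNReal.ofReal_mul (by positivity), ENNReal.ofReal_pow (by positivity)]
  calc ∫⁻ z in closedBall 0 r, f z ∂μ
      ≤ ∫⁻ z in {0}, f z ∂μ + ∫⁻ z in ⋃ k : ℕ, dyadicShell (r / 2 ^ k), f z ∂μ :=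
        (lintegral_mono_set hcover).trans (lintegral_union_le _ _ _)
    _ ≤ ENNReal.ofReal (2 ^ ((d : ℝ) + s) * r ^ (t - s)) * ENNReal.ofReal (4 / (t - s)) * Q := by
        rw [hzero, zero_add]
        exact setLIntegral_iUnion_le_of_le_two_rpow_neg_pow (by linarith) (by linarith) hterm
    _ ≤ ENNReal.ofReal (r ^ (t - s)) * ENNReal.ofReal (2 ^ (d + 3) / (t - s)) * Q :=
        mul_le_mul_left (ofReal_two_rpow_mul_mul_ofReal_four_div_le d (by linarith)
          (by positivity) le_rfl (by linarith)) _
    _ = _ := mul_assoc _ _ _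

lemma setLIntegral_compl_closedBall_powerKernel_mul_translateDefect_le {r s : ℝ} (hr : 0 < r)
    (hs : 0 < s) (hs1 : s ≤ 1) :
    ∫⁻ z in (closedBall 0 r)ᶜ, powerKernel (finrank ℝ F + s) z * translateDefect μ E z ∂μ
      ≤ ENNReal.ofReal (r ^ (-s))
        * (ENNReal.ofReal (2 ^ (finrank ℝ F + 3) / s) * μ (ball 0 1) * μ E) := by
  set d := finrank ℝ F
  set X := μ (ball 0 1) * μ E
  set q := ENNReal.ofReal ((2 : ℝ) ^ (-s))
  set f := fun z => powerKernel (d + s) z * translateDefect μ E z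
  have hcover : (closedBall (0 : F) r)ᶜ ⊆ ⋃ k : ℕ, dyadicShell (2 ^ k * (2 * r)) := fun z hz =>
    mem_iUnion.2 (exists_mem_dyadicShell_two_pow_mul hr (by simpa using hz))
  have hterm (k : ℕ) : ∫⁻ z in dyadicShell (2 ^ k * (2 * r)), f z ∂μ
      ≤ ENNReal.ofReal (2 ^ ((d : ℝ) + s) * (2 * r) ^ (-s)) * q ^ k * X := by
    have hρ : 0 < 2 ^ k * (2 * r) := by positivity
    calc ∫⁻ z in dyadicShell (2 ^ k * (2 * r)), f z ∂μ
        ≤ ENNReal.ofReal (2 ^ ((d : ℝ) + s) * (2 ^ k * (2 * r)) ^ ((d : ℝ) - (d + s))) * X :=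
          setLIntegral_dyadicShell_powerKernel_mul_le_of_le μ (by positivity) hρ
            (setLIntegral_dyadicShell_translateDefect_le_measure hρ.le)
      _ = ENNReal.ofReal (2 ^ ((d : ℝ) + s) * (2 * r) ^ (-s)) * q ^ k * X := by
          rw [sub_add_cancel_left, two_pow_mul_rpow (by positivity),
            ← mul_assoc (2 ^ ((d : ℝ) + s)), ENNReal.ofReal_mul (by positivity),
            ENNReal.ofReal_pow (by positivity)]
  calc ∫⁻ z in (closedBall 0 r)ᶜ, f z ∂μ
      ≤ ∫⁻ z in ⋃ k : ℕ, dyadicShell (2 ^ k * (2 * r)), f z ∂μ := lintegral_mono_set hcover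
    _ ≤ ENNReal.ofReal (2 ^ ((d : ℝ) + s) * (2 * r) ^ (-s)) * ENNReal.ofReal (4 / s) * X :=
        setLIntegral_iUnion_le_of_le_two_rpow_neg_pow hs hs1 hterm
    _ ≤ ENNReal.ofReal (r ^ (-s)) * ENNReal.ofReal (2 ^ (d + 3) / s) * X :=
        mul_le_mul_left (ofReal_two_rpow_mul_mul_ofReal_four_div_le d hs1 (by positivity)
          (Real.rpow_le_rpow_of_nonpos hr (by linarith) (by linarith)) hs.le) _
    _ = _ := by ring

lemma lintegral_powerKernel_mul_translateDefect_le (hE : MeasurableSet E) {r s t : ℝ} (hr : 0 < r)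
    (hs : 0 < s) (hst : s < t) (ht1 : t < 1) :
    ∫⁻ z, powerKernel (finrank ℝ F + s) z * translateDefect μ E z ∂μ
      ≤ ENNReal.ofReal (r ^ (-s))
          * (ENNReal.ofReal (2 ^ (finrank ℝ F + 3) / s) * μ (ball 0 1) * μ E)
        + ENNReal.ofReal (r ^ (t - s)) * (ENNReal.ofReal (2 ^ (finrank ℝ F + 3) / (t - s))
          * (ENNReal.ofReal (1 - t)
            * ∫⁻ z, powerKernel (finrank ℝ F + t) z * translateDefect μ E z ∂μ)) := by
  rw [← lintegral_add_compl _ (measurableSet_closedBall (x := 0) (ε := r)), add_comm]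
  exact add_le_add
    (setLIntegral_compl_closedBall_powerKernel_mul_translateDefect_le hr hs (hst.trans ht1).le)
    (setLIntegral_closedBall_powerKernel_mul_translateDefect_le hE hr hs.le hst ht1)

end AddHaar

noncomputable def interpolationConst (N : ℕ) : ℝ :=
  2 ^ (N + 3) * ((volume (ball (0 : EuclideanSpace ℝ (Fin N)) 1)).toReal + 1)

lemma interpolationConst_pos (N : ℕ) : 0 < interpolationConst N := by
  unfold interpolationConst
  positivity

lemma fracPer_eq_lintegral {N : ℕ} (α : ℝ) {E : Set (EuclideanSpace ℝ (Fin N))}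
    (hE : MeasurableSet E) :
    fracPer N α E = ∫⁻ z, powerKernel (N + α) z * translateDefect volume E z :=
  setLIntegral_setLIntegral_compl_sub hE (measurable_powerKernel _)

lemma fracPer_le_rpow_mul_add_rpow_mul {N : ℕ} {E : Set (EuclideanSpace ℝ (Fin N))}
    (hE : MeasurableSet E) {r s t : ℝ} (hr : 0 < r) (hs : 0 < s) (hst : s < t) (ht1 : t < 1) :
    fracPer N s E ≤ ENNReal.ofReal (r ^ (-s))
        * (ENNReal.ofReal (interpolationConst N * (1 / s) * (1 - s / t)⁻¹) * volume E)
      + ENNReal.ofReal (r ^ (t - s))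
        * (ENNReal.ofReal (interpolationConst N * (1 / s) * (1 - s / t)⁻¹)
          * (ENNReal.ofReal (1 - t) * fracPer N t E)) := by
  have hts : 0 < t - s := sub_pos.2 hst
  have hinv : (1 - s / t)⁻¹ = t / (t - s) := by field_simp [(hs.trans hst).ne']
  have hsplit := lintegral_powerKernel_mul_translateDefect_le (μ := volume) hE hr hs hst ht1
  rw [finrank_euclideanSpace_fin, ← ENNReal.ofReal_toReal measure_ball_lt_top.ne] at hsplit
  rw [fracPer_eq_lintegral s hE, fracPer_eq_lintegral t hE, interpolationConst, hinv]
  set v := (volume (ball (0 : EuclideanSpace ℝ (Fin N)) 1)).toReal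
  have hv : 0 ≤ v := ENNReal.toReal_nonneg
  refine hsplit.trans (add_le_add ?_ ?_) <;> gcongr
  · rw [← ENNReal.ofReal_mul (by positivity)]
    refine ENNReal.ofReal_le_ofReal ?_
    calc 2 ^ (N + 3) / s * v = 2 ^ (N + 3) * v * (1 / s) * 1 := by ring
      _ ≤ _ := by
        gcongr
        · linarith
        · rw [le_div_iff₀ hts]
          linarith
  · calc 2 ^ (N + 3) / (t - s) = 2 ^ (N + 3) * 1 * (1 / s) * (s / (t - s)) := by field_simp
      _ ≤ _ := by
        gcongr
        linarith

theorem stmt2_general (N : ℕ) :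
    ∃ c : ℝ, 0 < c ∧ ∀ s t : ℝ, 0 < s → s < t → t < 1 →
      ∀ E : Set (EuclideanSpace ℝ (Fin N)), MeasurableSet E → volume E < ⊤ →
        fracPer N s E ≤ ENNReal.ofReal (c * (1 / s) * (1 - s / t)⁻¹) *
          (volume E) ^ (1 - s / t) *
          (ENNReal.ofReal (1 - t) * fracPer N t E) ^ (s / t) := by
  refine ⟨2 * interpolationConst N, mul_pos two_pos (interpolationConst_pos N),
    fun s t hs hst ht1 E hE hEfin => ?_⟩
  rcases eq_or_ne (volume E) 0 with hE0 | hE0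
  · simp [fracPer, interEnergy, setLIntegral_measure_zero _ _ hE0]
  rw [mul_assoc 2, mul_assoc 2, ENNReal.ofReal_mul zero_le_two, ENNReal.ofReal_ofNat]
  exact le_two_mul_mul_rpow_mul_rpow_of_forall_le hs hst hE0 hEfin.ne ENNReal.ofReal_ne_top
    fun r hr => fracPer_le_rpow_mul_add_rpow_mul hE hr hs hst ht1

/-- Interpolation estimate:
`P_s(E) ≤ c_N (1/s) (1-s/t)⁻¹ |E|^{1-s/t} ((1-t) P_t(E))^{s/t}` in `[0,∞]`. -/
theorem stmt2 (N : ℕ) (hN : 0 < N) :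
    ∃ c : ℝ, 0 < c ∧ ∀ s t : ℝ, 0 < s → s < t → t < 1 →
      ∀ E : Set (EuclideanSpace ℝ (Fin N)), MeasurableSet E → volume E < ⊤ →
        fracPer N s E ≤ ENNReal.ofReal (c * (1 / s) * (1 - s / t)⁻¹) *
          (volume E) ^ (1 - s / t) *
          (ENNReal.ofReal (1 - t) * fracPer N t E) ^ (s / t) :=
  stmt2_general N
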